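/- The correction factor f vanishes linearly at τ = 0, uniformly on bounded sets: for every Pe > 0 and every R > 0 there exists a constant C > 0 such that for all x, y ∈ ℝ³ with |x| ≤ R and |y| ≤ R and all τ ∈ (0, 1], |f(x,y,τ)| ≤ C·τ, where f(x,y,τ) := exp( τ·Pe·[ (x₁−y₁)²/12 − (x₂+y₂)²/4 − τ(x₁−y₁)(x₂+y₂)/12 ] / ( 4(1+τ²/12) ) ) / √(1+τ²/12) − 1. -/

import Mathlib

open Real

lemma my_abs_exp_sub_one (a : ℝ) : |Real.exp a - 1| ≤ |a| * Real.exp |a| := by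
  rcases le_or_gt 0 a with ha | ha
  · rw [abs_of_nonneg ha, abs_of_nonneg (by nlinarith [Real.add_one_le_exp a] : (0:ℝ) ≤ Real.exp a - 1)]
    have h1 : -a + 1 ≤ Real.exp (-a) := Real.add_one_le_exp (-a)
    have h2 : Real.exp a * Real.exp (-a) = 1 := by rw [← Real.exp_add]; simp
    nlinarith [Real.exp_pos a]
  · have h1 : Real.exp a < 1 := Real.exp_lt_one_iff.mpr ha
    rw [abs_of_neg ha, abs_of_neg (by linarith : Real.exp a - 1 < 0)]
    have h2 : a + 1 ≤ Real.exp a := Real.add_one_le_exp a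
    have h3 : 1 ≤ Real.exp (-a) := Real.one_le_exp (by linarith)
    nlinarith

lemma my_coord_le (x : EuclideanSpace ℝ (Fin 3)) (i : Fin 3) : |x i| ≤ ‖x‖ := by
  rw [EuclideanSpace.norm_eq]
  have h : |x i| ^ 2 ≤ ∑ j, ‖x j‖ ^ 2 := by
    have := Finset.single_le_sum (f := fun j => ‖x j‖ ^ 2)
      (fun j _ => sq_nonneg _) (Finset.mem_univ i)
    simpa [Real.norm_eq_abs] using this
  calc |x i| = Real.sqrt (|x i| ^ 2) := (Real.sqrt_sq (abs_nonneg _)).symm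
    _ ≤ _ := Real.sqrt_le_sqrt h

set_option maxHeartbeats 1000000 in
lemma my_key (Pe R τ u v : ℝ) (hPe : 0 < Pe) (hR : 0 < R)
    (hτ0 : 0 < τ) (hτ1 : τ ≤ 1) (hub : |u| ≤ 2 * R) (hvb : |v| ≤ 2 * R) :
    |Real.exp (τ * Pe * (u ^ 2 / 12 - v ^ 2 / 4 - τ * u * v / 12)
        / (4 * (1 + τ ^ 2 / 12))) / Real.sqrt (1 + τ ^ 2 / 12) - 1|
      ≤ (Pe * R ^ 2 * Real.exp (Pe * R ^ 2) + 1) * τ := by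
  set K : ℝ := Pe * R ^ 2 with hK
  have hKpos : 0 < K := by positivity
  have hu2 : u ^ 2 ≤ 4 * R ^ 2 := by nlinarith [sq_abs u, abs_nonneg u]
  have hv2 : v ^ 2 ≤ 4 * R ^ 2 := by nlinarith [sq_abs v, abs_nonneg v]
  have habs : |u| * |v| ≤ 4 * R ^ 2 := by nlinarith [abs_nonneg u, abs_nonneg v]
  have htuv1 : τ * u * v ≤ 4 * R ^ 2 := by
    nlinarith [le_abs_self (u * v), neg_abs_le (u * v), abs_mul u v,
      mul_nonneg (by linarith : (0:ℝ) ≤ 1 - τ) (mul_nonneg (abs_nonneg u) (abs_nonneg v))]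
  have htuv2 : -(4 * R ^ 2) ≤ τ * u * v := by
    nlinarith [le_abs_self (u * v), neg_abs_le (u * v), abs_mul u v,
      mul_nonneg (by linarith : (0:ℝ) ≤ 1 - τ) (mul_nonneg (abs_nonneg u) (abs_nonneg v))]
  set Q : ℝ := u ^ 2 / 12 - v ^ 2 / 4 - τ * u * v / 12 with hQ
  have hQb : |Q| ≤ 2 * R ^ 2 := by
    rw [abs_le]
    constructor <;> [skip; skip] <;>
      · rw [hQ]; nlinarith [sq_nonneg u, sq_nonneg v]
  set d : ℝ := 4 * (1 + τ ^ 2 / 12) with hd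
  have hd4 : 4 ≤ d := by nlinarith
  have hdpos : 0 < d := by linarith
  set a : ℝ := τ * Pe * Q / d with ha
  have hab : |a| ≤ K * τ := by
    rw [ha, abs_div, abs_of_pos hdpos, abs_mul, abs_mul, abs_of_pos hτ0, abs_of_pos hPe,
      div_le_iff₀ hdpos]
    have h1 : τ * Pe * |Q| ≤ τ * Pe * (2 * R ^ 2) :=
      mul_le_mul_of_nonneg_left hQb (by positivity)
    have h2 : τ * Pe * (2 * R ^ 2) ≤ K * τ * 4 := by rw [hK]; nlinarith [mul_pos hτ0 hPe]
    have h3 : K * τ * 4 ≤ K * τ * d :=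
      mul_le_mul_of_nonneg_left hd4 (by positivity)
    linarith
  have haK : |a| ≤ K := le_trans hab (by nlinarith)
  have hexp : |Real.exp a - 1| ≤ K * Real.exp K * τ := by
    calc |Real.exp a - 1| ≤ |a| * Real.exp |a| := my_abs_exp_sub_one a
      _ ≤ (K * τ) * Real.exp K :=
        mul_le_mul hab (Real.exp_le_exp.mpr haK) (Real.exp_pos _).le (by positivity)
      _ = K * Real.exp K * τ := by ring
  set s : ℝ := Real.sqrt (1 + τ ^ 2 / 12) with hs
  have hs1 : (1 : ℝ) ≤ s := by
    have := Real.sqrt_le_sqrt (show (1:ℝ) ≤ 1 + τ ^ 2 / 12 by nlinarith)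
    rwa [Real.sqrt_one] at this
  have hs2 : s ≤ 1 + τ ^ 2 / 24 := by
    have h := Real.sqrt_le_sqrt (show (1 + τ ^ 2 / 12 : ℝ) ≤ (1 + τ ^ 2 / 24) ^ 2 by nlinarith)
    rwa [Real.sqrt_sq (by positivity : (0:ℝ) ≤ 1 + τ ^ 2 / 24)] at h
  have hspos : 0 < s := by linarith
  have hsplit : Real.exp a / s - 1 = (Real.exp a - 1) / s + (1 / s - 1) := by
    field_simp
    ring
  rw [hsplit]
  have h1 : |(Real.exp a - 1) / s| ≤ K * Real.exp K * τ := by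
    rw [abs_div, abs_of_pos hspos]
    calc |Real.exp a - 1| / s ≤ |Real.exp a - 1| / 1 :=
          div_le_div_of_nonneg_left (abs_nonneg _) one_pos hs1
      _ = |Real.exp a - 1| := div_one _
      _ ≤ K * Real.exp K * τ := hexp
  have h2 : |1 / s - 1| ≤ τ := by
    rw [abs_of_nonpos (by
      have : 1 / s ≤ 1 := by rw [div_le_one hspos]; exact hs1
      linarith)]
    have h3 : 1 - 1 / s ≤ s - 1 := by
      have h4 : 2 - s ≤ 1 / s := by rw [le_div_iff₀ hspos]; nlinarith
      linarith
    nlinarith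
  calc |(Real.exp a - 1) / s + (1 / s - 1)| ≤ |(Real.exp a - 1) / s| + |1 / s - 1| :=
        abs_add_le _ _
    _ ≤ K * Real.exp K * τ + τ := add_le_add h1 h2
    _ = (K * Real.exp K + 1) * τ := by ring

/-- The correction factor `f` arising in the factorization of the Smoluchowski
shear fundamental solution through the heat kernel. -/
noncomputable def fcorr (Pe : ℝ) (x y : EuclideanSpace ℝ (Fin 3)) (τ : ℝ) : ℝ :=
  Real.exp (τ * Pe *
      ((x 0 - y 0) ^ 2 / 12 - (x 1 + y 1) ^ 2 / 4
        - τ * (x 0 - y 0) * (x 1 + y 1) / 12) / (4 * (1 + τ ^ 2 / 12)))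
    / Real.sqrt (1 + τ ^ 2 / 12) - 1

/-- The correction factor vanishes linearly at `τ = 0`, uniformly on bounded
sets: for every `Pe > 0` and `R > 0` there is a `C > 0` with
`|f(x,y,τ)| ≤ C τ` whenever `|x| ≤ R`, `|y| ≤ R` and `τ ∈ (0,1]`. -/
theorem fcorr_linear_vanishing_uniform
    (Pe : ℝ) (hPe : 0 < Pe) (R : ℝ) (hR : 0 < R) :
    ∃ C : ℝ, 0 < C ∧ ∀ (x y : EuclideanSpace ℝ (Fin 3)) (τ : ℝ),
      ‖x‖ ≤ R → ‖y‖ ≤ R → τ ∈ Set.Ioc (0 : ℝ) 1 →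
        |fcorr Pe x y τ| ≤ C * τ := by
  refine ⟨Pe * R ^ 2 * Real.exp (Pe * R ^ 2) + 1, by positivity, ?_⟩
  rintro x y τ hx hy ⟨hτ0, hτ1⟩
  have hub : |x 0 - y 0| ≤ 2 * R :=
    (abs_sub (x 0) (y 0)).trans (by
      linarith [(my_coord_le x 0).trans hx, (my_coord_le y 0).trans hy])
  have hvb : |x 1 + y 1| ≤ 2 * R :=
    (abs_add_le (x 1) (y 1)).trans (by
      linarith [(my_coord_le x 1).trans hx, (my_coord_le y 1).trans hy])
  exact my_key Pe R τ (x 0 - y 0) (x 1 + y 1) hPe hR hτ0 hτ1 hub hvb
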